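/- Theorem 3.1(c). Fix t ∈ ℝ. Suppose x ∈ 𝓓_{ε1,ε3}, g is an admissible window function, σ(t) > 0 is such that the zones O_k, 0 ≤ k ≤ K, are pairwise disjoint, Err_ℓ(t) < (1/2)|G_ℓ(0)| A_ℓ(t) for each ℓ, and 2M(t)(τ0 + Π_0(t)) ≤ g_0(t) μ(t). Let ε̃1 satisfy M(t)(τ0 + Π_0(t)) ≤ ε̃1 ≤ g_0(t)μ(t) − M(t)(τ0 + Π_0(t)); let η̌_0 = 0 and η̌_ℓ(t) = argmax_{η ∈ 𝓗_{t,ℓ}} |Ṽ_x(t,η)| for 1 ≤ ℓ ≤ K. Then for each ℓ = 0,1,…,K, |Ṽ_x(t, η̌_ℓ) − G_ℓ(0) x_ℓ(t)| ≤ Err_ℓ(t) + 2π I_1 A_ℓ(t) · |G_ℓ|^{−1}(|G_ℓ(0)| − 2 Err_ℓ(t)/A_ℓ(t)). -/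

import Mathlib

open MeasureTheory Real

noncomputable section

/-- The adaptive short-time Fourier transform with time-varying window width `σ`. -/
def aSTFT (x : ℝ → ℂ) (g : ℝ → ℝ) (σ : ℝ → ℝ) (t η : ℝ) : ℂ :=
  ∫ τ : ℝ, x (t + τ) * (((σ t)⁻¹ * g (τ / σ t) : ℝ) : ℂ) *
    Complex.exp (-(2 * (π : ℂ) * η * τ) * Complex.I)

/-- The absolute moments `I_n = ∫ |τ^n g(τ)| dτ` of the window. -/
def momentI (g : ℝ → ℝ) (n : ℕ) : ℝ := ∫ τ : ℝ, |τ| ^ n * |g τ|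

/-- The `k`-th component `x_k(s) = A_k(s) e^{2πi φ_k(s)}`. -/
def xcomp (A φ : ℕ → ℝ → ℝ) (k : ℕ) (s : ℝ) : ℂ :=
  (A k s : ℂ) * Complex.exp ((2 * (π : ℂ) * φ k s) * Complex.I)

/-- `M(t) = Σ_{k=0}^K A_k(t)`. -/
def Msum (K : ℕ) (A : ℕ → ℝ → ℝ) (t : ℝ) : ℝ := ∑ k ∈ Finset.range (K + 1), A k t

/-- `μ(t) = min_{0 ≤ k ≤ K} A_k(t)`. -/
def muMin (K : ℕ) (A : ℕ → ℝ → ℝ) (t : ℝ) : ℝ :=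
  (Finset.range (K + 1)).inf' (by simp) fun k => A k t

/-- `G(ξ) = ∫ e^{iπcτ²} g(τ) e^{−2πiξτ} dτ`, the Fourier transform of the
chirp-modulated window. -/
def chirpG (g : ℝ → ℝ) (c ξ : ℝ) : ℂ :=
  ∫ τ : ℝ, Complex.exp (((π * c * τ ^ 2 : ℝ) : ℂ) * Complex.I) * (g τ : ℂ) *
    Complex.exp (-(2 * (π : ℂ) * ξ * τ) * Complex.I)

/-- `ğ(ξ,λ) = ∫ g(τ) e^{−2πiξτ − iπλτ²} dτ` (used to define admissibility). -/
def breveG (g : ℝ → ℝ) (lam ξ : ℝ) : ℂ :=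
  ∫ τ : ℝ, (g τ : ℂ) *
    Complex.exp (-(2 * (π : ℂ) * ξ * τ) * Complex.I - ((π * lam * τ ^ 2 : ℝ) : ℂ) * Complex.I)

/-- The chirp-rate parameter `σ(t)² φ''_k(t)` of the `k`-th component. -/
def crate (φ : ℕ → ℝ → ℝ) (σ : ℝ → ℝ) (k : ℕ) (t : ℝ) : ℝ :=
  σ t ^ 2 * deriv (deriv (φ k)) t

/-- `Π_0(t) = ε1 I_1 σ(t) + (π/3) ε3 I_3 σ(t)³`. -/
def Pi0 (g : ℝ → ℝ) (σ : ℝ → ℝ) (ε1 ε3 t : ℝ) : ℝ :=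
  ε1 * momentI g 1 * σ t + π / 3 * ε3 * momentI g 3 * σ t ^ 3

/-- `Υ_{k,ℓ} = α_k + α_ℓ + 2 Σ_{j between k and ℓ} α_j`. -/
def Ups (αf : ℕ → ℝ) (k l : ℕ) : ℝ :=
  αf k + αf l + 2 * ∑ j ∈ Finset.Ioo (min k l) (max k l), αf j

/-- `Err_ℓ(t) = M(t)Π_0(t) + Σ_{k≠ℓ} A_k(t) |G_k(Υ_{k,ℓ} − α_ℓ)|`. -/
def ErrL (K : ℕ) (A φ : ℕ → ℝ → ℝ) (g : ℝ → ℝ) (σ : ℝ → ℝ) (αf : ℕ → ℝ)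
    (ε1 ε3 : ℝ) (l : ℕ) (t : ℝ) : ℝ :=
  Msum K A t * Pi0 g σ ε1 ε3 t +
    ∑ k ∈ (Finset.range (K + 1)).erase l,
      A k t * ‖chirpG g (crate φ σ k t) (Ups αf k l - αf l)‖

/-- `g_0(t) = min_{0 ≤ k ≤ K} |G_k(0)|`. -/
def g0min (K : ℕ) (g : ℝ → ℝ) (φ : ℕ → ℝ → ℝ) (σ : ℝ → ℝ) (t : ℝ) : ℝ :=
  (Finset.range (K + 1)).inf' (by simp) fun k => ‖chirpG g (crate φ σ k t) 0‖

/-- `𝓖_t = {η : |Ṽ_x(t,η)| > ε̃1}`. -/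
def Gt (x : ℝ → ℂ) (g : ℝ → ℝ) (σ : ℝ → ℝ) (t eps : ℝ) : Set ℝ :=
  {η | eps < ‖aSTFT x g σ t η‖}

/-- `𝓗_{t,k} = {η ∈ 𝓖_t : |η − φ'_k(t)| < α_k/σ(t)}`. -/
def Htk (x : ℝ → ℂ) (g : ℝ → ℝ) (σ : ℝ → ℝ) (φ : ℕ → ℝ → ℝ) (αf : ℕ → ℝ)
    (t eps : ℝ) (k : ℕ) : Set ℝ :=
  {η | η ∈ Gt x g σ t eps ∧ |η - deriv (φ k) t| < αf k / σ t}

/-!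
After the substitution `τ = σ(t) u`, the transform of each component is compared with that of
its local chirp `x_k(t) e^{2πi(φ'_k(t) h + φ''_k(t) h²/2)}`, which is exactly
`x_k(t) G_k(σ(t)(η - φ'_k(t)))`; the relative Lipschitz bound on `A_k` and the third-order
Taylor bound on `φ_k` make the error at most `A_k(t) Π_0(t)`. Disjoint zones separate
consecutive instantaneous frequencies by `(α_j + α_{j+1})/σ(t)`, so on the `ℓ`-th zone every
other component is evaluated at distance at least `Υ_{k,ℓ} - α_ℓ`, where `|G_k|` is small since
it is even and decreasing: there `Ṽ_x(t, η)` is `G_ℓ(σ(t)(η - φ'_ℓ(t))) x_ℓ(t)` up to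
`Err_ℓ(t)`. The centre `φ'_ℓ(t)` clears the threshold `ε̃1`, so the maximiser `η̌_ℓ` beats it,
which forces `|G_ℓ(σ(t)(η̌_ℓ - φ'_ℓ(t)))| ≥ |G_ℓ(0)| - 2 Err_ℓ(t)/A_ℓ(t)`. As `|G_ℓ|` is
continuous and vanishes at infinity (Riemann–Lebesgue), this level is attained at some
`ξ ≥ σ(t)|η̌_ℓ - φ'_ℓ(t)|`, where `|G_ℓ|^{-1}` is pinned down; the Lipschitz bound
`|G_ℓ(ξ) - G_ℓ(0)| ≤ 2π I_1 |ξ|` finishes the proof.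
-/

open Filter Topology FourierTransform

lemma norm_mul_exp_sub_mul_exp_le (a b : ℂ) (θ₁ θ₂ : ℝ) :
    ‖a * Complex.exp (θ₁ * Complex.I) - b * Complex.exp (θ₂ * Complex.I)‖ ≤
      ‖a - b‖ + ‖b‖ * |θ₁ - θ₂| := by
  have hsplit : a * Complex.exp (θ₁ * Complex.I) - b * Complex.exp (θ₂ * Complex.I) =
      (a - b) * Complex.exp (θ₁ * Complex.I) +
        b * Complex.exp (θ₂ * Complex.I) * (Complex.exp (Complex.I * ↑(θ₁ - θ₂)) - 1) := by
    rw [mul_assoc b, mul_sub, ← Complex.exp_add]; push_cast; ring_nf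
  calc _ ≤ ‖a - b‖ + ‖b‖ * ‖Complex.exp (Complex.I * ↑(θ₁ - θ₂)) - 1‖ := by
        rw [hsplit]
        refine (norm_add_le _ _).trans_eq ?_
        simp only [norm_mul, Complex.norm_exp_ofReal_mul_I, mul_one]
    _ ≤ ‖a - b‖ + ‖b‖ * |θ₁ - θ₂| := by
        gcongr; exact Real.norm_eq_abs _ ▸ Real.norm_exp_I_mul_ofReal_sub_one_le

lemma norm_sub_le_of_norm_sub_sum_le {ι E : Type*} [NormedAddCommGroup E] [DecidableEq ι]
    {S : Finset ι} {l : ι} (hl : l ∈ S) {v : E} {w : ι → E} {e : ℝ}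
    (h : ‖v - ∑ k ∈ S, w k‖ ≤ e) : ‖v - w l‖ ≤ e + ∑ k ∈ S.erase l, ‖w k‖ := by
  rw [← Finset.add_sum_erase S w hl] at h
  calc ‖v - w l‖ = ‖(v - (w l + ∑ k ∈ S.erase l, w k)) + ∑ k ∈ S.erase l, w k‖ := by abel_nf
    _ ≤ e + ∑ k ∈ S.erase l, ‖w k‖ := (norm_add_le _ _).trans (add_le_add h (norm_sum_le _ _))

lemma abs_le_of_abs_deriv_le_pow_of_nonneg {f f' : ℝ → ℝ} {C : ℝ} {n : ℕ}
    (hf : ∀ x, HasDerivAt f (f' x) x) (h0 : f 0 = 0) (hf' : ∀ x, |f' x| ≤ C * |x| ^ n)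
    {x : ℝ} (hx : 0 ≤ x) : |f x| ≤ C * x ^ (n + 1) / (n + 1) := by
  have hB : ∀ y, HasDerivAt (fun y => C * y ^ (n + 1) / (n + 1)) (C * y ^ n) y := fun y => by
    refine (((hasDerivAt_pow (n + 1) y).const_mul C).div_const ((n : ℝ) + 1)).congr_deriv ?_
    push_cast; field_simp
  refine image_norm_le_of_norm_deriv_right_le_deriv_boundary (a := 0) (b := x)
    (fun y _ => (hf y).continuousAt.continuousWithinAt) (fun y _ => (hf y).hasDerivWithinAt)
    (by simp [h0]) hB (fun y hy => ?_) ⟨hx, le_rfl⟩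
  simpa [abs_of_nonneg hy.1] using hf' y

lemma abs_le_of_abs_deriv_le_pow {f f' : ℝ → ℝ} {C : ℝ} {n : ℕ}
    (hf : ∀ x, HasDerivAt f (f' x) x) (h0 : f 0 = 0) (hf' : ∀ x, |f' x| ≤ C * |x| ^ n)
    (x : ℝ) : |f x| ≤ C * |x| ^ (n + 1) / (n + 1) := by
  rcases le_total 0 x with hx | hx
  · simpa [abs_of_nonneg hx] using abs_le_of_abs_deriv_le_pow_of_nonneg hf h0 hf' hx
  · have hreflect := abs_le_of_abs_deriv_le_pow_of_nonneg (f := fun y => f (-y))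
      (f' := fun y => -f' (-y))
      (fun y => by simpa [Function.comp_def] using (hf (-y)).comp y (hasDerivAt_neg y))
      (by simpa using h0) (fun y => by simpa using hf' (-y)) (neg_nonneg.mpr hx)
    simpa [abs_of_nonpos hx] using hreflect

lemma abs_taylor_two_remainder_le {φ : ℝ → ℝ} {ε : ℝ} (hφ : ContDiff ℝ 3 φ)
    (h3 : ∀ s, |deriv (deriv (deriv φ)) s| ≤ ε) (t h : ℝ) :
    |φ (t + h) - φ t - deriv φ t * h - deriv (deriv φ) t * h ^ 2 / 2| ≤ ε * |h| ^ 3 / 6 := by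
  set φ₁ := deriv φ
  set φ₂ := deriv φ₁
  have hd : ∀ k : ℕ, k ≤ 2 → ∀ s, HasDerivAt (deriv^[k] φ) (deriv^[k + 1] φ s) s :=
    fun k hk s => by
      rw [Function.iterate_succ_apply']
      exact ((hφ.of_le (by norm_cast; omega)).iterate_deriv' 1 k).differentiable one_ne_zero
        |>.differentiableAt.hasDerivAt
  have hr₂ : ∀ h, |φ₂ (t + h) - φ₂ t| ≤ ε * |h| := fun h => by
    simpa using abs_le_of_abs_deriv_le_pow (f := fun h => φ₂ (t + h) - φ₂ t) (n := 0)
      (fun h => ((hd 2 le_rfl (t + h)).comp_const_add t h).sub_const _) (by simp)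
      (by simpa using fun h => h3 (t + h)) h
  have hr₁ : ∀ h, |φ₁ (t + h) - φ₁ t - φ₂ t * h| ≤ ε / 2 * |h| ^ 2 := fun h => by
    have := abs_le_of_abs_deriv_le_pow (f := fun h => φ₁ (t + h) - φ₁ t - φ₂ t * h) (n := 1)
      (fun h => (((hd 1 (by norm_num) (t + h)).comp_const_add t h).sub_const _).sub
        ((hasDerivAt_id h).const_mul _)) (by simp) (by simpa using hr₂) h
    convert this using 1; norm_num; ring
  have := abs_le_of_abs_deriv_le_pow
    (f := fun h => φ (t + h) - φ t - φ₁ t * h - φ₂ t * h ^ 2 / 2) (n := 2)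
    (fun h => ((((hd 0 (by norm_num) (t + h)).comp_const_add t h).sub_const _).sub
      ((hasDerivAt_id h).const_mul _)).sub (((hasDerivAt_pow 2 h).const_mul _).div_const 2))
    (by simp) (fun h => by convert hr₁ h using 2; simp; ring) h
  convert this using 1; ring

lemma norm_fourier_sub_le {f : ℝ → ℂ} (hf : Integrable f) (hf' : Integrable fun x : ℝ => x • f x)
    (ξ ξ' : ℝ) : ‖𝓕 f ξ - 𝓕 f ξ'‖ ≤ 2 * π * (∫ x, |x| * ‖f x‖) * |ξ - ξ'| := by
  have hderiv_le : ∀ w, ‖𝓕 (fun x : ℝ => (-2 * π * Complex.I * x) • f x) w‖ ≤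
      2 * π * ∫ x, |x| * ‖f x‖ := fun w => by
    rw [Real.fourier_real_eq, ← integral_const_mul]
    refine (norm_integral_le_integral_norm _).trans_eq (integral_congr_ae (.of_forall fun x => ?_))
    simp [abs_of_pos pi_pos]
    ring
  simpa [← Real.norm_eq_abs] using convex_univ.norm_image_sub_le_of_norm_hasDerivWithin_le
    (fun w _ => (Real.hasDerivAt_fourier hf hf' w).hasDerivWithinAt) (fun w _ => hderiv_le w)
    (Set.mem_univ ξ') (Set.mem_univ ξ)

lemma momentI_nonneg (g : ℝ → ℝ) (n : ℕ) : 0 ≤ momentI g n :=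
  integral_nonneg fun τ => by positivity

def chirpWindow (g : ℝ → ℝ) (c τ : ℝ) : ℂ :=
  Complex.exp (((π * c * τ ^ 2 : ℝ) : ℂ) * Complex.I) * (g τ : ℂ)

section ChirpWindow

variable {g : ℝ → ℝ}

lemma norm_chirpWindow (g : ℝ → ℝ) (c τ : ℝ) : ‖chirpWindow g c τ‖ = |g τ| := by
  rw [chirpWindow, norm_mul, Complex.norm_exp_ofReal_mul_I, one_mul, Complex.norm_real,
    Real.norm_eq_abs]

lemma integrable_chirpWindow (hg : Integrable g) (c : ℝ) : Integrable (chirpWindow g c) := by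
  refine hg.norm.mono' ?_ (.of_forall fun τ => (norm_chirpWindow g c τ).le)
  unfold chirpWindow
  exact (by fun_prop : Continuous _).aestronglyMeasurable.mul
    (Complex.continuous_ofReal.comp_aestronglyMeasurable hg.aestronglyMeasurable)

lemma chirpG_eq_fourier (g : ℝ → ℝ) (c : ℝ) : chirpG g c = 𝓕 (chirpWindow g c) := by
  ext ξ
  rw [Real.fourier_real_eq_integral_exp_smul, chirpG]
  congr 1 with τ
  rw [smul_eq_mul, chirpWindow]
  push_cast
  ring_nf

lemma chirpG_eq_breveG (g : ℝ → ℝ) (c ξ : ℝ) : chirpG g c ξ = breveG g (-c) ξ := by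
  rw [chirpG, breveG]
  congr 1 with τ
  rw [mul_comm _ (g τ : ℂ), mul_assoc, ← Complex.exp_add]
  push_cast
  ring_nf

lemma integrable_chirpG_integrand (hg : Integrable g) (c ξ : ℝ) :
    Integrable fun τ : ℝ => Complex.exp (((π * c * τ ^ 2 : ℝ) : ℂ) * Complex.I) * (g τ : ℂ) *
      Complex.exp (-(2 * (π : ℂ) * ξ * τ) * Complex.I) :=
  (integrable_chirpWindow hg c).mul_bdd (c := 1) (by fun_prop : Continuous _).aestronglyMeasurable
    (.of_forall fun τ => by simp [Complex.norm_exp])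

lemma continuous_chirpG (hg : Integrable g) (c : ℝ) : Continuous (chirpG g c) := by
  rw [chirpG_eq_fourier]
  exact VectorFourier.fourierIntegral_continuous Real.continuous_fourierChar continuous_inner
    (integrable_chirpWindow hg c)

lemma tendsto_norm_chirpG_atTop (g : ℝ → ℝ) (c : ℝ) :
    Tendsto (fun ξ => ‖chirpG g c ξ‖) atTop (𝓝 0) := by
  rw [chirpG_eq_fourier]
  simpa using ((Real.zero_at_infty_fourier (chirpWindow g c)).mono_left
    atTop_le_cocompact).norm

lemma norm_chirpG_sub_chirpG_zero_le (hg : Integrable g) (hg₁ : Integrable fun τ : ℝ => τ * g τ)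
    (c ξ : ℝ) : ‖chirpG g c ξ - chirpG g c 0‖ ≤ 2 * π * momentI g 1 * |ξ| := by
  have hw₁ : Integrable fun x : ℝ => x • chirpWindow g c x := by
    refine hg₁.norm.mono' (aestronglyMeasurable_id.smul
      (integrable_chirpWindow hg c).aestronglyMeasurable) (.of_forall fun x => ?_)
    simp [norm_chirpWindow]
  simpa [chirpG_eq_fourier, momentI, norm_chirpWindow] using
    norm_fourier_sub_le (integrable_chirpWindow hg c) hw₁ ξ 0

lemma norm_chirpG_abs (heven : ∀ lam ξ, ‖breveG g lam (-ξ)‖ = ‖breveG g lam ξ‖) (c ξ : ℝ) :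
    ‖chirpG g c |ξ|‖ = ‖chirpG g c ξ‖ := by
  rcases le_total 0 ξ with h | h
  · rw [abs_of_nonneg h]
  · rw [abs_of_nonpos h, chirpG_eq_breveG, chirpG_eq_breveG, heven]

lemma norm_chirpG_le_of_le_abs (heven : ∀ lam ξ, ‖breveG g lam (-ξ)‖ = ‖breveG g lam ξ‖)
    (hdec : ∀ lam ξ₁ ξ₂, 0 ≤ ξ₁ → ξ₁ ≤ ξ₂ → ‖breveG g lam ξ₂‖ ≤ ‖breveG g lam ξ₁‖)
    {c w ξ : ℝ} (hw : 0 ≤ w) (hwξ : w ≤ |ξ|) : ‖chirpG g c ξ‖ ≤ ‖chirpG g c w‖ := by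
  rw [← norm_chirpG_abs heven, chirpG_eq_breveG, chirpG_eq_breveG]
  exact hdec _ _ _ hw hwξ

end ChirpWindow

section WindowIntegral

variable {g : ℝ → ℝ} {σ : ℝ → ℝ} {t : ℝ}

lemma aSTFT_eq_integral_comp_mul (x : ℝ → ℂ) (hσ : 0 < σ t) (η : ℝ) :
    aSTFT x g σ t η = ∫ u : ℝ, x (t + σ t * u) * (g u : ℂ) *
      Complex.exp (-(2 * (π : ℂ) * η * (σ t * u)) * Complex.I) := by
  have hsub := Measure.integral_comp_mul_left (fun τ : ℝ => x (t + τ) *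
    (((σ t)⁻¹ * g (τ / σ t) : ℝ) : ℂ) * Complex.exp (-(2 * (π : ℂ) * η * τ) * Complex.I)) (σ t)
  rw [abs_of_pos (inv_pos.mpr hσ)] at hsub
  rw [aSTFT, ← smul_inv_smul₀ hσ.ne' (∫ τ : ℝ, _), ← hsub, ← integral_smul]
  congr 1 with u
  rw [Complex.real_smul, mul_div_cancel_left₀ u hσ.ne']
  have hσC : (σ t : ℂ) ≠ 0 := by exact_mod_cast hσ.ne'
  push_cast
  field_simp

lemma integrable_window_integrand {y : ℝ → ℂ} {C : ℝ} (hy : Continuous y) (hyC : ∀ s, ‖y s‖ ≤ C)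
    (hg : Integrable g) (s t η : ℝ) :
    Integrable fun u : ℝ => y (t + s * u) * (g u : ℂ) *
      Complex.exp (-(2 * (π : ℂ) * η * (s * u)) * Complex.I) := by
  have hgC : AEStronglyMeasurable (fun u => (g u : ℂ)) :=
    Complex.continuous_ofReal.comp_aestronglyMeasurable hg.aestronglyMeasurable
  refine (hg.norm.const_mul C).mono' (((hy.comp (by fun_prop)).aestronglyMeasurable.mul hgC).mul
    (by fun_prop : Continuous _).aestronglyMeasurable) (.of_forall fun u => ?_)
  simpa [Complex.norm_exp] using mul_le_mul_of_nonneg_right (hyC (t + s * u)) (abs_nonneg (g u))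

lemma aSTFT_finset_sum {ι : Type*} (S : Finset ι) {y : ι → ℝ → ℂ}
    (hy : ∀ k ∈ S, Continuous (y k)) (hyC : ∀ k ∈ S, ∃ C, ∀ s, ‖y k s‖ ≤ C) (hg : Integrable g)
    (hσ : 0 < σ t) (η : ℝ) :
    aSTFT (fun s => ∑ k ∈ S, y k s) g σ t η = ∑ k ∈ S, aSTFT (y k) g σ t η := by
  simp_rw [aSTFT_eq_integral_comp_mul _ hσ, Finset.sum_mul]
  refine integral_finsetSum S fun k hk => ?_
  obtain ⟨C, hC⟩ := hyC k hk
  exact integrable_window_integrand (hy k hk) hC hg _ _ _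

lemma norm_aSTFT_sub_mul_chirpG_le {y : ℝ → ℂ} {C : ℝ} (hy : Continuous y)
    (hyC : ∀ s, ‖y s‖ ≤ C) (hg : Integrable g) (hg₁ : Integrable fun τ : ℝ => τ * g τ)
    (hg₃ : Integrable fun τ : ℝ => τ ^ 3 * g τ) (hσ : 0 < σ t) {a : ℂ} {f₁ f₂ B₁ B₃ : ℝ}
    (hloc : ∀ h, ‖y (t + h) - a * Complex.exp (((2 * π * (f₁ * h + f₂ * h ^ 2 / 2) : ℝ) : ℂ) *
      Complex.I)‖ ≤ B₁ * |h| + B₃ * |h| ^ 3) (η : ℝ) :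
    ‖aSTFT y g σ t η - a * chirpG g (σ t ^ 2 * f₂) (σ t * (η - f₁))‖ ≤
      B₁ * momentI g 1 * σ t + B₃ * momentI g 3 * σ t ^ 3 := by
  set s := σ t
  have hphase : ∀ u : ℝ, Complex.exp (((π * (s ^ 2 * f₂) * u ^ 2 : ℝ) : ℂ) * Complex.I) *
      Complex.exp (-(2 * (π : ℂ) * ((s * (η - f₁) : ℝ) : ℂ) * u) * Complex.I) =
      Complex.exp (((2 * π * (f₁ * (s * u) + f₂ * (s * u) ^ 2 / 2) : ℝ) : ℂ) * Complex.I) *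
        Complex.exp (-(2 * (π : ℂ) * η * (s * u)) * Complex.I) := fun u => by
    rw [← Complex.exp_add, ← Complex.exp_add]; push_cast; ring_nf
  have hexp : ∀ u : ℝ, ‖Complex.exp (-(2 * (π : ℂ) * η * (s * u)) * Complex.I)‖ = 1 := fun u => by
    simp [Complex.norm_exp]
  have hI₁ : Integrable fun u : ℝ => |u| * |g u| := by simpa [abs_mul] using hg₁.abs
  have hI₃ : Integrable fun u : ℝ => |u| ^ 3 * |g u| := by simpa [abs_mul, abs_pow] using hg₃.abs
  rw [aSTFT_eq_integral_comp_mul y hσ, chirpG, ← integral_const_mul,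
    ← integral_sub (integrable_window_integrand hy hyC hg s t η)
      ((integrable_chirpG_integrand hg _ _).const_mul a)]
  calc _ ≤ ∫ u : ℝ, B₁ * s * (|u| * |g u|) + B₃ * s ^ 3 * (|u| ^ 3 * |g u|) := by
        refine norm_integral_le_of_norm_le ((hI₁.const_mul _).add (hI₃.const_mul _))
          (.of_forall fun u => ?_)
        have hdiff : y (t + s * u) * (g u : ℂ) * Complex.exp (-(2 * (π : ℂ) * η * (s * u)) *
            Complex.I) - a * (Complex.exp (((π * (s ^ 2 * f₂) * u ^ 2 : ℝ) : ℂ) * Complex.I) *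
            (g u : ℂ) * Complex.exp (-(2 * (π : ℂ) * ((s * (η - f₁) : ℝ) : ℂ) * u) *
            Complex.I)) = (y (t + s * u) - a * Complex.exp (((2 * π * (f₁ * (s * u) +
            f₂ * (s * u) ^ 2 / 2) : ℝ) : ℂ) * Complex.I)) * (g u : ℂ) *
            Complex.exp (-(2 * (π : ℂ) * η * (s * u)) * Complex.I) := by
          linear_combination (-(a * (g u : ℂ))) * hphase u
        rw [hdiff, norm_mul, norm_mul, hexp, mul_one, Complex.norm_real, Real.norm_eq_abs]
        calc _ ≤ (B₁ * |s * u| + B₃ * |s * u| ^ 3) * |g u| :=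
              mul_le_mul_of_nonneg_right (hloc _) (abs_nonneg _)
          _ = _ := by rw [abs_mul, abs_of_pos hσ]; ring
    _ = _ := by
        rw [integral_add (hI₁.const_mul _) (hI₃.const_mul _), integral_const_mul,
          integral_const_mul, momentI, momentI]
        simp only [pow_one]
        ring

lemma norm_aSTFT_sub_finset_sum_le {ι : Type*} (S : Finset ι) {x : ℝ → ℂ} {y : ι → ℝ → ℂ}
    {z : ι → ℂ} {b : ι → ℝ} (hx : ∀ s, x s = ∑ k ∈ S, y k s) (hy : ∀ k ∈ S, Continuous (y k))
    (hyC : ∀ k ∈ S, ∃ C, ∀ s, ‖y k s‖ ≤ C) (hg : Integrable g) (hσ : 0 < σ t) {η : ℝ}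
    (hyz : ∀ k ∈ S, ‖aSTFT (y k) g σ t η - z k‖ ≤ b k) :
    ‖aSTFT x g σ t η - ∑ k ∈ S, z k‖ ≤ ∑ k ∈ S, b k := by
  rw [funext hx, aSTFT_finset_sum S hy hyC hg hσ, ← Finset.sum_sub_distrib]
  exact (norm_sum_le _ _).trans (Finset.sum_le_sum hyz)

end WindowIntegral

lemma add_le_abs_sub_of_disjoint {a b r r' : ℝ} (hr : 0 < r) (hr' : 0 < r')
    (h : Disjoint {η : ℝ | |η - a| < r} {η : ℝ | |η - b| < r'}) : r + r' ≤ |a - b| := by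
  simpa [Metric.ball, Real.dist_eq] using (disjoint_ball_ball_iff hr hr').1 h

lemma Ups_comm (α : ℕ → ℝ) (k l : ℕ) : Ups α k l = Ups α l k := by
  rw [Ups, Ups, min_comm, max_comm]; ring

lemma Ups_succ (α : ℕ → ℝ) {k l : ℕ} (hkl : k < l) :
    Ups α k (l + 1) = Ups α k l + α l + α (l + 1) := by
  rw [Ups, Ups, min_eq_left hkl.le, max_eq_right hkl.le, min_eq_left (by omega),
    max_eq_right (by omega), Finset.Ioo_add_one_right_eq_Ioc, ← Finset.Ioo_insert_right hkl,
    Finset.sum_insert Finset.right_notMem_Ioo]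
  ring

lemma Ups_le_sub_of_gaps {α v : ℕ → ℝ} {k l : ℕ} (hkl : k < l)
    (hgap : ∀ j, k ≤ j → j < l → α j + α (j + 1) ≤ v (j + 1) - v j) : Ups α k l ≤ v l - v k := by
  induction l, hkl using Nat.le_induction with
  | base => simpa [Ups, Finset.Ioo_add_one_right_eq_Ioc] using hgap k le_rfl (by omega)
  | succ l hkl ih =>
    rw [Ups_succ α hkl]
    linarith [ih fun j hj hjl => hgap j hj (by omega), hgap l (by omega) (by omega)]

lemma Ups_le_abs_sub_of_gaps {α v : ℕ → ℝ} {K : ℕ}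
    (hgap : ∀ j, j + 1 ≤ K → α j + α (j + 1) ≤ v (j + 1) - v j) {k l : ℕ} (hk : k ≤ K)
    (hl : l ≤ K) (hkl : k ≠ l) : Ups α k l ≤ |v k - v l| := by
  rcases hkl.lt_or_gt with h | h
  · rw [abs_sub_comm]
    exact (Ups_le_sub_of_gaps h fun j _ hj => hgap j (by omega)).trans (le_abs_self _)
  · rw [Ups_comm]
    exact (Ups_le_sub_of_gaps h fun j _ hj => hgap j (by omega)).trans (le_abs_self _)

lemma le_Ups_sub {α : ℕ → ℝ} {k l : ℕ} (hα : ∀ j ∈ Finset.Ioo (min k l) (max k l), 0 ≤ α j) :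
    α k ≤ Ups α k l - α l := by
  have := Finset.sum_nonneg hα
  rw [Ups]; linarith

lemma le_of_le_apply_of_leftInvOn {f finv : ℝ → ℝ} (hf : Continuous f)
    (hlim : Tendsto f atTop (𝓝 0)) (hinv : Set.LeftInvOn finv f (Set.Ici 0)) {v ξ : ℝ}
    (hv : 0 < v) (hξ : 0 ≤ ξ) (hvξ : v ≤ f ξ) : ξ ≤ finv v := by
  obtain ⟨X, hXv, hξX⟩ := ((hlim.eventually_lt_const hv).and (eventually_ge_atTop ξ)).exists
  obtain ⟨ξ', hξ', hfξ'⟩ := intermediate_value_Icc' hξX hf.continuousOn ⟨hXv.le, hvξ⟩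
  rw [← hfξ', hinv (Set.mem_Ici.mpr (hξ.trans hξ'.1))]
  exact hξ'.1

lemma sub_div_le_norm_of_peak {Vc Vη Gc Gη z : ℂ} {E : ℝ} (hz : 0 < ‖z‖)
    (hc : ‖Vc - Gc * z‖ ≤ E) (hη : ‖Vη - Gη * z‖ ≤ E) (hpeak : ‖Vc‖ ≤ ‖Vη‖) :
    ‖Gc‖ - 2 * E / ‖z‖ ≤ ‖Gη‖ := by
  have hc' := norm_sub_norm_le (Gc * z) Vc
  have hη' := norm_sub_norm_le Vη (Gη * z)
  rw [norm_sub_rev, norm_mul] at hc'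
  rw [norm_mul] at hη'
  refine le_of_mul_le_mul_right ?_ hz
  rw [sub_mul, div_mul_cancel₀ _ hz.ne']
  linarith

lemma norm_sub_le_at_peak {V G : ℝ → ℂ} {Ginv : ℝ → ℝ} {z : ℂ} {s c r η E I₁ : ℝ}
    (hz : 0 < ‖z‖) (hI₁ : 0 ≤ I₁)
    (hzone : ∀ η, |η - c| < r → ‖V η - G (s * (η - c)) * z‖ ≤ E) (hr : 0 < r)
    (hη : |η - c| < r) (hpeak : ‖V c‖ ≤ ‖V η‖) (hE : 2 * E / ‖z‖ < ‖G 0‖)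
    (hG : Continuous G) (hGlim : Tendsto (fun ξ => ‖G ξ‖) atTop (𝓝 0))
    (hGabs : ∀ ξ, ‖G |ξ|‖ = ‖G ξ‖) (hGinv : Set.LeftInvOn Ginv (fun ξ => ‖G ξ‖) (Set.Ici 0))
    (hGlip : ∀ ξ, ‖G ξ - G 0‖ ≤ 2 * π * I₁ * |ξ|) :
    ‖V η - G 0 * z‖ ≤ E + 2 * π * I₁ * ‖z‖ * Ginv (‖G 0‖ - 2 * E / ‖z‖) := by
  have hzone_c := hzone c (by simpa using hr)
  rw [sub_self, mul_zero] at hzone_c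
  have hlow := sub_div_le_norm_of_peak hz hzone_c (hzone η hη) hpeak
  rw [← hGabs (s * (η - c))] at hlow
  have hwidth : |s * (η - c)| ≤ Ginv (‖G 0‖ - 2 * E / ‖z‖) :=
    le_of_le_apply_of_leftInvOn hG.norm hGlim hGinv (sub_pos.mpr hE) (abs_nonneg _) hlow
  calc ‖V η - G 0 * z‖
      ≤ ‖V η - G (s * (η - c)) * z‖ + ‖G (s * (η - c)) - G 0‖ * ‖z‖ := by
        rw [← norm_mul, show V η - G 0 * z = (V η - G (s * (η - c)) * z) +
          (G (s * (η - c)) - G 0) * z by ring]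
        exact norm_add_le _ _
    _ ≤ E + 2 * π * I₁ * |s * (η - c)| * ‖z‖ := by gcongr; exacts [hzone η hη, hGlip _]
    _ ≤ E + 2 * π * I₁ * ‖z‖ * Ginv (‖G 0‖ - 2 * E / ‖z‖) := by
        rw [mul_right_comm]; gcongr

section Signal

variable {K : ℕ} {A φ : ℕ → ℝ → ℝ} {g σ : ℝ → ℝ} {αf : ℕ → ℝ} {ε1 ε3 t : ℝ}

lemma norm_xcomp (A φ : ℕ → ℝ → ℝ) (k : ℕ) (s : ℝ) : ‖xcomp A φ k s‖ = |A k s| := by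
  simp [xcomp, Complex.norm_exp]

lemma norm_xcomp_sub_le {k : ℕ} (hAt : 0 ≤ A k t)
    (hlip : ∀ τ, |A k (t + τ) - A k t| ≤ ε1 * |τ| * A k t) (hφ : ContDiff ℝ 3 (φ k))
    (h3 : ∀ s, |deriv (deriv (deriv (φ k))) s| ≤ ε3) (h : ℝ) :
    ‖xcomp A φ k (t + h) - xcomp A φ k t * Complex.exp (((2 * π * (deriv (φ k) t * h +
      deriv (deriv (φ k)) t * h ^ 2 / 2) : ℝ) : ℂ) * Complex.I)‖ ≤
      ε1 * A k t * |h| + π / 3 * ε3 * A k t * |h| ^ 3 := by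
  have hxcomp : ∀ s, xcomp A φ k s = (A k s : ℂ) * Complex.exp (((2 * π * φ k s : ℝ) : ℂ) *
      Complex.I) := fun s => by simp [xcomp]
  rw [hxcomp, hxcomp, mul_assoc (A k t : ℂ), ← Complex.exp_add, ← add_mul, ← Complex.ofReal_add]
  refine (norm_mul_exp_sub_mul_exp_le _ _ _ _).trans ?_
  rw [← Complex.ofReal_sub, Complex.norm_real, Complex.norm_real, Real.norm_eq_abs,
    Real.norm_eq_abs, abs_of_nonneg hAt]
  have hphase : |2 * π * φ k (t + h) - (2 * π * φ k t + 2 * π * (deriv (φ k) t * h +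
      deriv (deriv (φ k)) t * h ^ 2 / 2))| ≤ 2 * π * (ε3 * |h| ^ 3 / 6) := by
    rw [show 2 * π * φ k (t + h) - (2 * π * φ k t + 2 * π * (deriv (φ k) t * h +
      deriv (deriv (φ k)) t * h ^ 2 / 2)) = 2 * π * (φ k (t + h) - φ k t - deriv (φ k) t * h -
      deriv (deriv (φ k)) t * h ^ 2 / 2) by ring, abs_mul, abs_of_pos (by positivity)]
    gcongr
    exact abs_taylor_two_remainder_le hφ h3 t h
  calc _ ≤ ε1 * |h| * A k t + A k t * (2 * π * (ε3 * |h| ^ 3 / 6)) :=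
        add_le_add (hlip h) (mul_le_mul_of_nonneg_left hphase hAt)
    _ = _ := by ring
lemma norm_aSTFT_xcomp_sub_le {k : ℕ} {C : ℝ} (hA : Continuous (A k)) (hAC : ∀ s, |A k s| ≤ C)
    (hAt : 0 ≤ A k t) (hlip : ∀ τ, |A k (t + τ) - A k t| ≤ ε1 * |τ| * A k t)
    (hφ : ContDiff ℝ 3 (φ k)) (h3 : ∀ s, |deriv (deriv (deriv (φ k))) s| ≤ ε3)
    (hg : Integrable g) (hg₁ : Integrable fun τ : ℝ => τ * g τ)
    (hg₃ : Integrable fun τ : ℝ => τ ^ 3 * g τ) (hσ : 0 < σ t) (η : ℝ) :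
    ‖aSTFT (xcomp A φ k) g σ t η -
      xcomp A φ k t * chirpG g (crate φ σ k t) (σ t * (η - deriv (φ k) t))‖ ≤
      A k t * Pi0 g σ ε1 ε3 t := by
  have hcont : Continuous (xcomp A φ k) := by
    have := hφ.continuous; unfold xcomp; fun_prop
  refine (norm_aSTFT_sub_mul_chirpG_le hcont (fun s => (norm_xcomp A φ k s).trans_le (hAC s))
    hg hg₁ hg₃ hσ (norm_xcomp_sub_le hAt hlip hφ h3) η).trans_eq ?_
  rw [Pi0]; ring

lemma norm_aSTFT_sub_sum_xcomp_le {x : ℝ → ℂ} (hA : ∀ k ≤ K, Continuous (A k))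
    (hAbdd : ∀ k ≤ K, ∃ C, ∀ s, |A k s| ≤ C) (hAt : ∀ k ≤ K, 0 ≤ A k t)
    (hlip : ∀ k ≤ K, ∀ τ, |A k (t + τ) - A k t| ≤ ε1 * |τ| * A k t)
    (hφ : ∀ k ≤ K, ContDiff ℝ 3 (φ k)) (h3 : ∀ k ≤ K, ∀ s, |deriv (deriv (deriv (φ k))) s| ≤ ε3)
    (hx : ∀ s, x s = ∑ k ∈ Finset.range (K + 1), xcomp A φ k s) (hg : Integrable g)
    (hg₁ : Integrable fun τ : ℝ => τ * g τ) (hg₃ : Integrable fun τ : ℝ => τ ^ 3 * g τ)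
    (hσ : 0 < σ t) (η : ℝ) :
    ‖aSTFT x g σ t η - ∑ k ∈ Finset.range (K + 1),
      xcomp A φ k t * chirpG g (crate φ σ k t) (σ t * (η - deriv (φ k) t))‖ ≤
      Msum K A t * Pi0 g σ ε1 ε3 t := by
  rw [Msum, Finset.sum_mul]
  refine norm_aSTFT_sub_finset_sum_le _ hx (fun k hk => ?_) (fun k hk => ?_) hg hσ fun k hk => ?_
  all_goals rw [Finset.mem_range_succ_iff] at hk
  · have := (hφ k hk).continuous; unfold xcomp; fun_prop
  · obtain ⟨C, hC⟩ := hAbdd k hk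
    exact ⟨C, fun s => (norm_xcomp A φ k s).trans_le (hC s)⟩
  · obtain ⟨C, hC⟩ := hAbdd k hk
    exact norm_aSTFT_xcomp_sub_le (hA k hk) hC (hAt k hk) (hlip k hk) (hφ k hk) (h3 k hk)
      hg hg₁ hg₃ hσ η

lemma Ups_le_of_disjoint_zones (hσ : 0 < σ t) (hαpos : ∀ k ≤ K, 0 < αf k)
    (hord : ∀ j, j + 1 ≤ K → deriv (φ j) t < deriv (φ (j + 1)) t)
    (hdisj : ∀ k ≤ K, ∀ l ≤ K, k ≠ l →
      Disjoint {η : ℝ | |η - deriv (φ k) t| < αf k / σ t}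
        {η : ℝ | |η - deriv (φ l) t| < αf l / σ t})
    {k l : ℕ} (hk : k ≤ K) (hl : l ≤ K) (hkl : k ≠ l) :
    Ups αf k l ≤ σ t * |deriv (φ k) t - deriv (φ l) t| := by
  rw [← abs_of_pos hσ, ← abs_mul, mul_sub]
  refine Ups_le_abs_sub_of_gaps (v := fun j => σ t * deriv (φ j) t) (fun j hj => ?_) hk hl hkl
  have hgap := add_le_abs_sub_of_disjoint (div_pos (hαpos j (by omega)) hσ)
    (div_pos (hαpos (j + 1) hj) hσ) (hdisj j (by omega) (j + 1) hj (by omega))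
  rw [abs_sub_comm, abs_of_pos (sub_pos.mpr (hord j hj)), ← add_div, div_le_iff₀ hσ] at hgap
  linarith

lemma norm_aSTFT_sub_chirpG_mul_xcomp_le_ErrL {x : ℝ → ℂ} {l : ℕ} (hl : l ≤ K)
    (hsum : ∀ η, ‖aSTFT x g σ t η - ∑ k ∈ Finset.range (K + 1),
      xcomp A φ k t * chirpG g (crate φ σ k t) (σ t * (η - deriv (φ k) t))‖ ≤
      Msum K A t * Pi0 g σ ε1 ε3 t)
    (hAt : ∀ k ≤ K, 0 ≤ A k t)
    (heven : ∀ lam ξ, ‖breveG g lam (-ξ)‖ = ‖breveG g lam ξ‖)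
    (hdec : ∀ lam ξ₁ ξ₂, 0 ≤ ξ₁ → ξ₁ ≤ ξ₂ → ‖breveG g lam ξ₂‖ ≤ ‖breveG g lam ξ₁‖)
    (hσ : 0 < σ t) (hαnn : ∀ k ≤ K, 0 ≤ αf k)
    (hsep : ∀ k ≤ K, k ≠ l → Ups αf k l ≤ σ t * |deriv (φ k) t - deriv (φ l) t|)
    {η : ℝ} (hη : |η - deriv (φ l) t| < αf l / σ t) :
    ‖aSTFT x g σ t η - chirpG g (crate φ σ l t) (σ t * (η - deriv (φ l) t)) * xcomp A φ l t‖ ≤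
      ErrL K A φ g σ αf ε1 ε3 l t := by
  rw [mul_comm, ErrL]
  refine (norm_sub_le_of_norm_sub_sum_le (Finset.mem_range.mpr (by omega)) (hsum η)).trans
    (add_le_add le_rfl (Finset.sum_le_sum fun k hk => ?_))
  obtain ⟨hkl, hk⟩ := Finset.mem_erase.mp hk
  replace hk : k ≤ K := Finset.mem_range_succ_iff.mp hk
  rw [norm_mul, norm_xcomp, abs_of_nonneg (hAt k hk)]
  refine mul_le_mul_of_nonneg_left (norm_chirpG_le_of_le_abs heven hdec ?_ ?_) (hAt k hk)
  · exact (hαnn k hk).trans (le_Ups_sub fun j hj => hαnn j (by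
      have := (Finset.mem_Ioo.mp hj).2; omega))
  · rw [lt_div_iff₀ hσ] at hη
    have htri := abs_sub_le (deriv (φ k) t) η (deriv (φ l) t)
    rw [abs_sub_comm (deriv (φ k) t) η] at htri
    rw [abs_mul, abs_of_pos hσ]
    nlinarith [hsep k hk hkl]

lemma ErrL_lt_Msum_mul {τ0 : ℝ} {l : ℕ} (hl : l ≤ K) (hApos : ∀ k ≤ K, 0 < A k t)
    (hτ0 : 0 < τ0) (heven : ∀ lam ξ, ‖breveG g lam (-ξ)‖ = ‖breveG g lam ξ‖)
    (hdec : ∀ lam ξ₁ ξ₂, 0 ≤ ξ₁ → ξ₁ ≤ ξ₂ → ‖breveG g lam ξ₂‖ ≤ ‖breveG g lam ξ₁‖)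
    (hαnn : ∀ k ≤ K, 0 ≤ αf k)
    (hξ : ∀ k ≤ K, ∃ ξk, 0 < ξk ∧ ‖chirpG g (crate φ σ k t) ξk‖ = τ0 ∧ ξk ≤ αf k) :
    ErrL K A φ g σ αf ε1 ε3 l t < Msum K A t * (τ0 + Pi0 g σ ε1 ε3 t) := by
  have hl' : l ∈ Finset.range (K + 1) := Finset.mem_range.mpr (by omega)
  have hcross : ∑ k ∈ (Finset.range (K + 1)).erase l,
      A k t * ‖chirpG g (crate φ σ k t) (Ups αf k l - αf l)‖ ≤
      ∑ k ∈ (Finset.range (K + 1)).erase l, A k t * τ0 := by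
    refine Finset.sum_le_sum fun k hk => ?_
    have hk' := Finset.mem_range_succ_iff.mp (Finset.mem_of_mem_erase hk)
    obtain ⟨ξk, hξk, hξkτ, hξkα⟩ := hξ k hk'
    have hUps := le_Ups_sub (k := k) (l := l) fun j hj => hαnn j (by
      have := (Finset.mem_Ioo.mp hj).2; omega)
    rw [← hξkτ]
    exact mul_le_mul_of_nonneg_left (norm_chirpG_le_of_le_abs heven hdec hξk.le
      (le_abs.mpr (.inl (hξkα.trans hUps)))) (hApos k hk').le
  rw [← Finset.sum_mul, Finset.sum_erase_eq_sub (f := fun k => A k t) hl'] at hcross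
  rw [ErrL, Msum] at *
  nlinarith [hApos l hl]

lemma g0min_mul_muMin_le {l : ℕ} (hl : l ≤ K) (hAt : 0 ≤ A l t) :
    g0min K g φ σ t * muMin K A t ≤ ‖chirpG g (crate φ σ l t) 0‖ * A l t := by
  have hl' : l ∈ Finset.range (K + 1) := Finset.mem_range.mpr (by omega)
  have hg0 : 0 ≤ g0min K g φ σ t := Finset.le_inf' _ _ fun _ _ => norm_nonneg _
  calc g0min K g φ σ t * muMin K A t ≤ g0min K g φ σ t * A l t :=
        mul_le_mul_of_nonneg_left (Finset.inf'_le _ hl') hg0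
    _ ≤ _ := mul_le_mul_of_nonneg_right
          (Finset.inf'_le (fun k => ‖chirpG g (crate φ σ k t) 0‖) hl') hAt

lemma deriv_lt_deriv_succ (hφ0 : deriv (φ 0) t = 0)
    (hφ'pos : ∀ k, 1 ≤ k → k ≤ K → ∃ c > 0, ∀ s, c ≤ deriv (φ k) s)
    (hfreq : ∃ d > 0, ∀ k, 2 ≤ k → k ≤ K → ∀ s, d ≤ deriv (φ k) s - deriv (φ (k - 1)) s)
    {j : ℕ} (hj : j + 1 ≤ K) : deriv (φ j) t < deriv (φ (j + 1)) t := by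
  rcases j.eq_zero_or_pos with rfl | hj0
  · obtain ⟨c, hc, hcφ⟩ := hφ'pos 1 le_rfl hj
    simpa [hφ0] using hc.trans_le (hcφ t)
  · obtain ⟨d, hd, hdφ⟩ := hfreq
    have := hdφ (j + 1) (by omega) hj t
    rw [Nat.add_sub_cancel] at this
    linarith

lemma deriv_mem_Htk {x : ℝ → ℂ} {τ0 epst : ℝ} {l : ℕ} (hl : l ≤ K)
    (hApos : ∀ k ≤ K, 0 < A k t) (hτ0 : 0 < τ0)
    (heven : ∀ lam ξ, ‖breveG g lam (-ξ)‖ = ‖breveG g lam ξ‖)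
    (hdec : ∀ lam ξ₁ ξ₂, 0 ≤ ξ₁ → ξ₁ ≤ ξ₂ → ‖breveG g lam ξ₂‖ ≤ ‖breveG g lam ξ₁‖)
    (hαpos : ∀ k ≤ K, 0 < αf k)
    (hξ : ∀ k ≤ K, ∃ ξk, 0 < ξk ∧ ‖chirpG g (crate φ σ k t) ξk‖ = τ0 ∧ ξk ≤ αf k)
    (hσ : 0 < σ t)
    (heps : epst ≤ g0min K g φ σ t * muMin K A t - Msum K A t * (τ0 + Pi0 g σ ε1 ε3 t))
    (hcentre : ‖aSTFT x g σ t (deriv (φ l) t) - chirpG g (crate φ σ l t) 0 * xcomp A φ l t‖ ≤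
      ErrL K A φ g σ αf ε1 ε3 l t) :
    deriv (φ l) t ∈ Htk x g σ φ αf t epst l := by
  refine ⟨?_, by simpa using div_pos (hαpos l hl) hσ⟩
  have hlow := norm_sub_norm_le (chirpG g (crate φ σ l t) 0 * xcomp A φ l t)
    (aSTFT x g σ t (deriv (φ l) t))
  rw [norm_sub_rev, norm_mul, norm_xcomp, abs_of_pos (hApos l hl)] at hlow
  show epst < _
  linarith [ErrL_lt_Msum_mul (ε1 := ε1) (ε3 := ε3) hl hApos hτ0 heven hdec
    (fun k hk => (hαpos k hk).le) hξ, g0min_mul_muMin_le (g := g) (φ := φ) (σ := σ) hl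
    (hApos l hl).le]

end Signal

theorem thm3_1c_general (K : ℕ) (A φ : ℕ → ℝ → ℝ) (ε1 ε3 : ℝ) (x : ℝ → ℂ)
    (g : ℝ → ℝ) (σ : ℝ → ℝ) (αf : ℕ → ℝ) (τ0 t epst : ℝ)
    (hε3 : 0 < ε3)
    (hAreg : ∀ k ≤ K, ContDiff ℝ 1 (A k))
    (hAbdd : ∀ k ≤ K, ∃ C, ∀ s, |A k s| ≤ C)
    (hφreg : ∀ k ≤ K, ContDiff ℝ 3 (φ k))
    (hφ0 : ∀ s, φ 0 s = 0)
    (hApos : ∀ k ≤ K, ∀ s, 0 < A k s)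
    (hφ'pos : ∀ k, 1 ≤ k → k ≤ K → ∃ c > 0, ∀ s, c ≤ deriv (φ k) s)
    (hfreq : ∃ d > 0, ∀ k, 2 ≤ k → k ≤ K → ∀ s, d ≤ deriv (φ k) s - deriv (φ (k - 1)) s)
    (hAlip : ∀ k ≤ K, ∀ s τ, |A k (s + τ) - A k s| ≤ ε1 * |τ| * A k s)
    (hφthird : ∀ k, 1 ≤ k → k ≤ K → ∀ s, |deriv (deriv (deriv (φ k))) s| ≤ ε3)
    (hx : ∀ s, x s = ∑ k ∈ Finset.range (K + 1), xcomp A φ k s)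
    (hgint : Integrable g)
    (hgI1 : Integrable fun τ : ℝ => τ * g τ)
    (hgI3 : Integrable fun τ : ℝ => τ ^ 3 * g τ)
    (hadm_even : ∀ lam ξ, ‖breveG g lam (-ξ)‖ = ‖breveG g lam ξ‖)
    (hadm_dec : ∀ lam ξ1 ξ2, 0 ≤ ξ1 → ξ1 ≤ ξ2 → ‖breveG g lam ξ2‖ ≤ ‖breveG g lam ξ1‖)
    (hσ : ∀ s, 0 < σ s)
    (hτ0 : 0 < τ0)
    (hξk : ∀ k ≤ K, ∃ ξk, 0 < ξk ∧ ‖chirpG g (crate φ σ k t) ξk‖ = τ0 ∧ ξk ≤ αf k)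
    (hdisj : ∀ k ≤ K, ∀ l ≤ K, k ≠ l →
      Disjoint {η : ℝ | |η - deriv (φ k) t| < αf k / σ t}
        {η : ℝ | |η - deriv (φ l) t| < αf l / σ t})
    (hErrsmall : ∀ l ≤ K,
      ErrL K A φ g σ αf ε1 ε3 l t < 1 / 2 * ‖chirpG g (crate φ σ l t) 0‖ * A l t)
    (heps2 : epst ≤ g0min K g φ σ t * muMin K A t - Msum K A t * (τ0 + Pi0 g σ ε1 ε3 t))
    (Ginv : ℕ → ℝ → ℝ)
    (hGinv : ∀ l ≤ K, ∀ ξ, 0 ≤ ξ → Ginv l ‖chirpG g (crate φ σ l t) ξ‖ = ξ)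
    (ηch : ℕ → ℝ)
    (hηmem : ∀ l, 1 ≤ l → l ≤ K → ηch l ∈ Htk x g σ φ αf t epst l)
    (hηmax : ∀ l, 1 ≤ l → l ≤ K → ∀ η ∈ Htk x g σ φ αf t epst l,
      ‖aSTFT x g σ t η‖ ≤ ‖aSTFT x g σ t (ηch l)‖)
    (hη0 : ηch 0 = 0)
    :
    ∀ l ≤ K,
      ‖aSTFT x g σ t (ηch l) - chirpG g (crate φ σ l t) 0 * xcomp A φ l t‖ ≤
        ErrL K A φ g σ αf ε1 ε3 l t +
          2 * π * momentI g 1 * A l t *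
            Ginv l (‖chirpG g (crate φ σ l t) 0‖ -
              2 * ErrL K A φ g σ αf ε1 ε3 l t / A l t) := by
  intro l hl
  have hs := hσ t
  have hAl := hApos l hl t
  have hαpos : ∀ k ≤ K, 0 < αf k := fun k hk => by
    obtain ⟨ξk, hξk, -, hξkα⟩ := hξk k hk
    exact hξk.trans_le hξkα
  have hφ0' : deriv (φ 0) = 0 := by
    rw [show φ 0 = fun _ => 0 from funext hφ0]; exact deriv_const' 0
  have h3 : ∀ k ≤ K, ∀ s, |deriv (deriv (deriv (φ k))) s| ≤ ε3 := fun k hk s => by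
    rcases k.eq_zero_or_pos with rfl | hk0
    · simpa [hφ0'] using hε3.le
    · exact hφthird k hk0 hk s
  have hzone := fun η => norm_aSTFT_sub_chirpG_mul_xcomp_le_ErrL (η := η) hl
    (norm_aSTFT_sub_sum_xcomp_le (fun k hk => (hAreg k hk).continuous) hAbdd
      (fun k hk => (hApos k hk t).le) (fun k hk => hAlip k hk t) hφreg h3 hx hgint hgI1 hgI3 hs)
    (fun k hk => (hApos k hk t).le) hadm_even hadm_dec hs (fun k hk => (hαpos k hk).le)
    (fun k hk hkl => Ups_le_of_disjoint_zones hs hαpos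
      (fun j hj => deriv_lt_deriv_succ (j := j) (congrFun hφ0' t) hφ'pos hfreq hj) hdisj hk hl hkl)
  have hcentre := hzone (deriv (φ l) t) (by simpa using div_pos (hαpos l hl) hs)
  rw [sub_self, mul_zero] at hcentre
  have hpeak : |ηch l - deriv (φ l) t| < αf l / σ t ∧
      ‖aSTFT x g σ t (deriv (φ l) t)‖ ≤ ‖aSTFT x g σ t (ηch l)‖ := by
    rcases l.eq_zero_or_pos with rfl | hl0
    · rw [hη0, hφ0']; exact ⟨by simpa using div_pos (hαpos 0 hl) hs, le_rfl⟩
    exact ⟨(hηmem l hl0 hl).2, hηmax l hl0 hl _ (deriv_mem_Htk hl (fun k hk => hApos k hk t) hτ0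
      hadm_even hadm_dec hαpos hξk hs heps2 hcentre)⟩
  have hz : ‖xcomp A φ l t‖ = A l t := by rw [norm_xcomp, abs_of_pos hAl]
  rw [← hz]
  refine norm_sub_le_at_peak (hz ▸ hAl) (momentI_nonneg g 1) hzone (div_pos (hαpos l hl) hs)
    hpeak.1 hpeak.2 ?_ (continuous_chirpG hgint _) (tendsto_norm_chirpG_atTop g _)
    (norm_chirpG_abs hadm_even _) (fun ξ hξ => hGinv l hl ξ hξ)
    (norm_chirpG_sub_chirpG_zero_le hgint hgI1 _)
  rw [hz, div_lt_iff₀ hAl]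
  linarith [hErrsmall l hl]

theorem thm3_1c (K : ℕ) (A φ : ℕ → ℝ → ℝ) (ε1 ε3 : ℝ) (x : ℝ → ℂ)
    (g : ℝ → ℝ) (σ : ℝ → ℝ) (αf : ℕ → ℝ) (τ0 t epst : ℝ)
    (hε1 : 0 < ε1) (hε3 : 0 < ε3)
    (hAreg : ∀ k ≤ K, ContDiff ℝ 1 (A k))
    (hAbdd : ∀ k ≤ K, ∃ C, ∀ s, |A k s| ≤ C)
    (hφreg : ∀ k ≤ K, ContDiff ℝ 3 (φ k))
    (hφ0 : ∀ s, φ 0 s = 0)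
    (hApos : ∀ k ≤ K, ∀ s, 0 < A k s)
    (hφ'pos : ∀ k, 1 ≤ k → k ≤ K → ∃ c > 0, ∀ s, c ≤ deriv (φ k) s)
    (hφ'bdd : ∀ k, 1 ≤ k → k ≤ K → ∃ C, ∀ s, deriv (φ k) s ≤ C)
    (hfreq : ∃ d > 0, ∀ k, 2 ≤ k → k ≤ K → ∀ s, d ≤ deriv (φ k) s - deriv (φ (k - 1)) s)
    (hAlip : ∀ k ≤ K, ∀ s τ, |A k (s + τ) - A k s| ≤ ε1 * |τ| * A k s)
    (hφ''bdd : ∀ k ≤ K, ∃ C, ∀ s, |deriv (deriv (φ k)) s| ≤ C)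
    (hφthird : ∀ k, 1 ≤ k → k ≤ K → ∀ s, |deriv (deriv (deriv (φ k))) s| ≤ ε3)
    (hx : ∀ s, x s = ∑ k ∈ Finset.range (K + 1), xcomp A φ k s)
    (hgint : Integrable g)
    (hgL2 : MemLp g 2 (volume : Measure ℝ))
    (hgI1 : Integrable fun τ : ℝ => τ * g τ)
    (hgI3 : Integrable fun τ : ℝ => τ ^ 3 * g τ)
    (hgnorm : (∫ τ : ℝ, g τ) = 1)
    (hadm_even : ∀ lam ξ, ‖breveG g lam (-ξ)‖ = ‖breveG g lam ξ‖)
    (hadm_dec : ∀ lam ξ1 ξ2, 0 ≤ ξ1 → ξ1 ≤ ξ2 → ‖breveG g lam ξ2‖ ≤ ‖breveG g lam ξ1‖)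
    (hσ : ∀ s, 0 < σ s)
    (hτ0 : 0 < τ0) (hτ0' : τ0 < 1)
    (hξk : ∀ k ≤ K, ∃ ξk, 0 < ξk ∧ ‖chirpG g (crate φ σ k t) ξk‖ = τ0 ∧ ξk ≤ αf k)
    (hdisj : ∀ k ≤ K, ∀ l ≤ K, k ≠ l →
      Disjoint {η : ℝ | |η - deriv (φ k) t| < αf k / σ t}
        {η : ℝ | |η - deriv (φ l) t| < αf l / σ t})
    (hErrsmall : ∀ l ≤ K,
      ErrL K A φ g σ αf ε1 ε3 l t < 1 / 2 * ‖chirpG g (crate φ σ l t) 0‖ * A l t)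
    (hmain : 2 * Msum K A t * (τ0 + Pi0 g σ ε1 ε3 t) ≤ g0min K g φ σ t * muMin K A t)
    (heps1 : Msum K A t * (τ0 + Pi0 g σ ε1 ε3 t) ≤ epst)
    (heps2 : epst ≤ g0min K g φ σ t * muMin K A t - Msum K A t * (τ0 + Pi0 g σ ε1 ε3 t))
    (Ginv : ℕ → ℝ → ℝ)
    (hGinv : ∀ l ≤ K, ∀ ξ, 0 ≤ ξ → Ginv l ‖chirpG g (crate φ σ l t) ξ‖ = ξ)
    (ηch : ℕ → ℝ)
    (hηmem : ∀ l, 1 ≤ l → l ≤ K → ηch l ∈ Htk x g σ φ αf t epst l)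
    (hηmax : ∀ l, 1 ≤ l → l ≤ K → ∀ η ∈ Htk x g σ φ αf t epst l,
      ‖aSTFT x g σ t η‖ ≤ ‖aSTFT x g σ t (ηch l)‖)
    (hη0 : ηch 0 = 0)
    :
    ∀ l ≤ K,
      ‖aSTFT x g σ t (ηch l) - chirpG g (crate φ σ l t) 0 * xcomp A φ l t‖ ≤
        ErrL K A φ g σ αf ε1 ε3 l t +
          2 * π * momentI g 1 * A l t *
            Ginv l (‖chirpG g (crate φ σ l t) 0‖ -
              2 * ErrL K A φ g σ αf ε1 ε3 l t / A l t) :=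
  thm3_1c_general K A φ ε1 ε3 x g σ αf τ0 t epst hε3 hAreg hAbdd hφreg hφ0 hApos hφ'pos hfreq hAlip
    hφthird hx hgint hgI1 hgI3 hadm_even hadm_dec hσ hτ0 hξk hdisj hErrsmall heps2 Ginv hGinv ηch
    hηmem hηmax hη0
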